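/- The map γ : (0,1) → (0,1) given by γ(r) = 1 − r is an involution and is a symmetry for the Giry tricocycloid: as maps (0,1)² → (0,1)², (1×γ)∘v∘(1×γ) = v∘(γ×1)∘v, where v(r,s) = (rs, r(1−s)/(1−rs)). -/

import Mathlib

/-- The open unit interval `(0,1) ⊂ ℝ`. -/
def UI : Type := {r : ℝ // 0 < r ∧ r < 1}

/-- The Giry tricocycloid map `v : (0,1)² → (0,1)²`, `v(r,s) = (rs, r(1−s)/(1−rs))`. -/
noncomputable def giryV (p : UI × UI) : UI × UI :=
  ⟨⟨p.1.1 * p.2.1, by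
      obtain ⟨⟨r, hr0, hr1⟩, ⟨s, hs0, hs1⟩⟩ := p
      constructor <;> nlinarith⟩,
   ⟨p.1.1 * (1 - p.2.1) / (1 - p.1.1 * p.2.1), by
      obtain ⟨⟨r, hr0, hr1⟩, ⟨s, hs0, hs1⟩⟩ := p
      have h1 : (0:ℝ) < 1 - r * s := by nlinarith
      constructor
      · apply div_pos (by nlinarith) h1
      · rw [div_lt_one h1]; nlinarith⟩⟩

/-- The map `γ(r) = 1 − r` on `(0,1)`. -/
def giryGamma (r : UI) : UI :=
  ⟨1 - r.1, by obtain ⟨r, hr0, hr1⟩ := r; constructor <;> nlinarith⟩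

/-- `γ(r) = 1−r` is an involution and a symmetry for the Giry tricocycloid:
`(1×γ) ∘ v ∘ (1×γ) = v ∘ (γ×1) ∘ v` as maps `(0,1)² → (0,1)²`. -/
theorem giry_gamma_symmetry :
    (∀ r : UI, giryGamma (giryGamma r) = r) ∧
    ∀ p : UI × UI,
      ((fun q : UI × UI => (q.1, giryGamma q.2)) ∘ giryV ∘
          fun q : UI × UI => (q.1, giryGamma q.2)) p =
        (giryV ∘ (fun q : UI × UI => (giryGamma q.1, q.2)) ∘ giryV) p := by
  constructor
  · intro r
    apply Subtype.ext
    simp [giryGamma]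
  · rintro ⟨⟨r, hr0, hr1⟩, ⟨s, hs0, hs1⟩⟩
    have h1 : (0:ℝ) < 1 - r * s := by nlinarith
    have h2 : (0:ℝ) < 1 - r * (1 - s) := by nlinarith
    simp only [Function.comp_apply, giryV, giryGamma, Prod.mk.injEq, Subtype.mk.injEq]
    refine Prod.ext (Subtype.ext ?_) (Subtype.ext ?_)
    · field_simp
    · field_simp
      ring_nf
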